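/- arXiv:2407.13024 — 8 statements merged into one kernel-verified Lean document; each statement's English description precedes it below -/
import Mathlib

section
/- Let Γ and Γ* be affine connections on a chart U ⊆ ℝⁿ that are dual with respect to a metric g. Then the lowered torsion T of Γ vanishes identically on U if and only if the quasi-statistical condition −Q*_{μνρ} + Q*_{νμρ} + T*_{ρμν} = 0 holds on U for all indices, i.e. if and only if (U, g, Γ*) is a quasi-statistical manifold. -/
open scoped BigOperators

/-- Partial derivative of a scalar function on ℝⁿ in the μ-th coordinate direction. -/
noncomputable def pd {n : ℕ} (f : (Fin n → ℝ) → ℝ) (μ : Fin n) (x : Fin n → ℝ) : ℝ :=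
  fderiv ℝ f x (Pi.single μ 1)

/-- Non-metricity `Q_{μνρ} = −(∂_μ g_{νρ} − Γ^σ_{νμ} g_{σρ} − Γ^σ_{ρμ} g_{σν})`
of a connection Γ with respect to a metric g. -/
noncomputable def nonmetricity {n : ℕ} (g : (Fin n → ℝ) → Matrix (Fin n) (Fin n) ℝ)
    (Γ : Fin n → Fin n → Fin n → (Fin n → ℝ) → ℝ)
    (μ ν ρ : Fin n) (x : Fin n → ℝ) : ℝ :=
  -(pd (fun y => g y ν ρ) μ x - (∑ σ, Γ σ ν μ x * g x σ ρ) - (∑ σ, Γ σ ρ μ x * g x σ ν))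

/-- Lowered torsion `T_{σνρ} = g_{σμ}(Γ^μ_{ρν} − Γ^μ_{νρ})` of a connection Γ. -/
noncomputable def loweredTorsion {n : ℕ} (g : (Fin n → ℝ) → Matrix (Fin n) (Fin n) ℝ)
    (Γ : Fin n → Fin n → Fin n → (Fin n → ℝ) → ℝ)
    (σ ν ρ : Fin n) (x : Fin n → ℝ) : ℝ :=
  ∑ μ, g x σ μ * (Γ μ ρ ν x - Γ μ ν ρ x)

/-- Γ and Γ* are dual connections with respect to the metric g on U:
`∂_μ g_{νρ} = g_{βρ} Γ^β_{νμ} + g_{βν} Γ*^β_{ρμ}`. -/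
noncomputable def DualOn {n : ℕ} (U : Set (Fin n → ℝ))
    (g : (Fin n → ℝ) → Matrix (Fin n) (Fin n) ℝ)
    (Γ Γs : Fin n → Fin n → Fin n → (Fin n → ℝ) → ℝ) : Prop :=
  ∀ x ∈ U, ∀ μ ν ρ : Fin n,
    pd (fun y => g y ν ρ) μ x
      = (∑ β, g x β ρ * Γ β ν μ x) + (∑ β, g x β ν * Γs β ρ μ x)

/-- (U, g, Γ) is a quasi-statistical manifold:
`−Q_{μνρ} + Q_{νμρ} + T_{ρμν} = 0` on U. -/
noncomputable def QuasiStatisticalOn {n : ℕ} (U : Set (Fin n → ℝ))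
    (g : (Fin n → ℝ) → Matrix (Fin n) (Fin n) ℝ)
    (Γ : Fin n → Fin n → Fin n → (Fin n → ℝ) → ℝ) : Prop :=
  ∀ x ∈ U, ∀ μ ν ρ : Fin n,
    -(nonmetricity g Γ μ ν ρ x) + nonmetricity g Γ ν μ ρ x
      + loweredTorsion g Γ ρ μ ν x = 0

/-- If Γ and Γ* are dual with respect to g on the chart U, then the
lowered torsion T of Γ vanishes identically on U if and only if (U, g, Γ*) is a
quasi-statistical manifold. -/
theorem torsion_free_iff_dual_quasiStatistical {n : ℕ}
    (U : Set (Fin n → ℝ)) (hU : IsOpen U)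
    (g : (Fin n → ℝ) → Matrix (Fin n) (Fin n) ℝ)
    (hg : ∀ μ ν : Fin n, ContDiffOn ℝ (⊤ : ℕ∞) (fun x => g x μ ν) U)
    (hsymm : ∀ x ∈ U, (g x).IsSymm)
    (Γ Γs : Fin n → Fin n → Fin n → (Fin n → ℝ) → ℝ)
    (hΓ : ∀ l m k : Fin n, ContDiffOn ℝ (⊤ : ℕ∞) (Γ l m k) U)
    (hΓs : ∀ l m k : Fin n, ContDiffOn ℝ (⊤ : ℕ∞) (Γs l m k) U)
    (hdual : DualOn U g Γ Γs) :
    (∀ x ∈ U, ∀ σ ν ρ : Fin n, loweredTorsion g Γ σ ν ρ x = 0)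
      ↔ QuasiStatisticalOn U g Γs := by
  have key : ∀ x ∈ U, ∀ μ ν ρ : Fin n,
      -(nonmetricity g Γs μ ν ρ x) + nonmetricity g Γs ν μ ρ x
        + loweredTorsion g Γs ρ μ ν x = loweredTorsion g Γ ρ μ ν x := by
    intro x hx μ ν ρ
    have hs : ∀ a b, g x a b = g x b a := fun a b =>
      (hsymm x hx).apply b a
    simp only [nonmetricity, loweredTorsion, hdual x hx μ ν ρ, hdual x hx ν μ ρ]
    rw [← sub_eq_zero]
    simp only [← Finset.sum_sub_distrib, ← Finset.sum_add_distrib,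
      ← Finset.sum_neg_distrib, neg_sub, neg_add, sub_eq_add_neg]
    refine Finset.sum_eq_zero fun i _ => ?_
    rw [hs ρ i]
    ring
  constructor
  · intro h x hx μ ν ρ
    rw [key x hx μ ν ρ, h x hx ρ μ ν]
  · intro h x hx σ ν ρ
    have := h x hx ν ρ σ
    rw [key x hx ν ρ σ] at this
    exact this
end

section
/- Let Γ and Γ* be affine connections on a chart U ⊆ ℝⁿ that are dual with respect to a metric g. Then the lowered torsion T* of Γ* vanishes identically on U if and only if the quasi-statistical condition −Q_{μνρ} + Q_{νμρ} + T_{ρμν} = 0 holds on U for all indices, i.e. if and only if (U, g, Γ) is a quasi-statistical manifold. -/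
open scoped BigOperators

/-- Auxiliary: under duality and symmetry, the quasi-statistical expression for Γ
equals the lowered torsion of the dual connection Γ*. -/
theorem qs_expr_eq_dual_torsion {n : ℕ}
    (U : Set (Fin n → ℝ)) (hU : IsOpen U)
    (g : (Fin n → ℝ) → Matrix (Fin n) (Fin n) ℝ)
    (hsymm : ∀ x ∈ U, (g x).IsSymm)
    (Γ Γs : Fin n → Fin n → Fin n → (Fin n → ℝ) → ℝ)
    (hdual : DualOn U g Γ Γs) (x : Fin n → ℝ) (hx : x ∈ U) (μ ν ρ : Fin n) :
    -(nonmetricity g Γ μ ν ρ x) + nonmetricity g Γ ν μ ρ x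
      + loweredTorsion g Γ ρ μ ν x = loweredTorsion g Γs ρ μ ν x := by
  have hgs : ∀ a b, g x a b = g x b a := fun a b => ((hsymm x hx).apply a b).symm
  have hpd : ∀ a b c : Fin n, pd (fun y => g y a b) c x
      = (∑ β, g x β a * Γ β b c x) + (∑ β, g x β b * Γs β a c x) := by
    intro a b c
    have he : pd (fun y => g y a b) c x = pd (fun y => g y b a) c x := by
      unfold pd
      congr 1
      apply Filter.EventuallyEq.fderiv_eq
      filter_upwards [hU.mem_nhds hx] with y hy
      exact ((hsymm y hy).apply a b).symm
    rw [he, hdual x hx c b a]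
  unfold nonmetricity loweredTorsion
  rw [hpd ν ρ μ, hpd μ ρ ν]
  simp only [show ∀ σ, g x ρ σ = g x σ ρ from fun σ => hgs ρ σ, mul_sub,
    Finset.sum_sub_distrib]
  simp only [mul_comm]
  ring

/-- If Γ and Γ* are dual with respect to g on the chart U, then the
lowered torsion T* of Γ* vanishes identically on U if and only if (U, g, Γ) is a
quasi-statistical manifold. -/
theorem dual_torsion_free_iff_quasiStatistical {n : ℕ}
    (U : Set (Fin n → ℝ)) (hU : IsOpen U)
    (g : (Fin n → ℝ) → Matrix (Fin n) (Fin n) ℝ)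
    (hg : ∀ μ ν : Fin n, ContDiffOn ℝ (⊤ : ℕ∞) (fun x => g x μ ν) U)
    (hsymm : ∀ x ∈ U, (g x).IsSymm)
    (Γ Γs : Fin n → Fin n → Fin n → (Fin n → ℝ) → ℝ)
    (hΓ : ∀ l m k : Fin n, ContDiffOn ℝ (⊤ : ℕ∞) (Γ l m k) U)
    (hΓs : ∀ l m k : Fin n, ContDiffOn ℝ (⊤ : ℕ∞) (Γs l m k) U)
    (hdual : DualOn U g Γ Γs) :
    (∀ x ∈ U, ∀ σ ν ρ : Fin n, loweredTorsion g Γs σ ν ρ x = 0)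
      ↔ QuasiStatisticalOn U g Γ := by
  constructor
  · intro h x hx μ ν ρ
    rw [qs_expr_eq_dual_torsion U hU g hsymm Γ Γs hdual x hx μ ν ρ]
    exact h x hx ρ μ ν
  · intro h x hx σ ν ρ
    rw [← qs_expr_eq_dual_torsion U hU g hsymm Γ Γs hdual x hx ν ρ σ]
    exact h x hx ν ρ σ
end

section
/- Let Γ be a torsion-free affine connection on a chart U ⊆ ℝⁿ whose non-metricity is of Weyl type, Q_{μνρ} = W_μ g_{νρ} for a smooth covector field W, and let Γ* be its dual connection with respect to g. Then the dual connection has non-metricity Q*_{μνρ} = −W_μ g_{νρ} and semi-symmetric lowered torsion T*_{ρμν} = −W_μ g_{νρ} + W_ν g_{μρ}, and the quasi-statistical condition −Q*_{μνρ} + Q*_{νμρ} + T*_{ρμν} = 0 holds on U, so (U, g, Γ*) is a quasi-statistical (quasi-Weyl) manifold. -/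
open scoped BigOperators

/-- If Γ is a torsion-free connection on U with Weyl non-metricity
`Q_{μνρ} = W_μ g_{νρ}` and Γ* is its dual with respect to g, then
`Q*_{μνρ} = −W_μ g_{νρ}`, `T*_{ρμν} = −W_μ g_{νρ} + W_ν g_{μρ}`, and (U, g, Γ*) is a
quasi-statistical (quasi-Weyl) manifold. -/
theorem quasiWeyl {n : ℕ}
    (U : Set (Fin n → ℝ)) (hU : IsOpen U)
    (g : (Fin n → ℝ) → Matrix (Fin n) (Fin n) ℝ)
    (hg : ∀ μ ν : Fin n, ContDiffOn ℝ (⊤ : ℕ∞) (fun x => g x μ ν) U)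
    (hsymm : ∀ x ∈ U, (g x).IsSymm)
    (W : (Fin n → ℝ) → Fin n → ℝ)
    (hW : ∀ μ : Fin n, ContDiffOn ℝ (⊤ : ℕ∞) (fun x => W x μ) U)
    (Γ Γs : Fin n → Fin n → Fin n → (Fin n → ℝ) → ℝ)
    (hΓ : ∀ l m k : Fin n, ContDiffOn ℝ (⊤ : ℕ∞) (Γ l m k) U)
    (hΓs : ∀ l m k : Fin n, ContDiffOn ℝ (⊤ : ℕ∞) (Γs l m k) U)
    (hTF : ∀ x ∈ U, ∀ l m k : Fin n, Γ l m k x = Γ l k m x)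
    (hQ : ∀ x ∈ U, ∀ μ ν ρ : Fin n,
      nonmetricity g Γ μ ν ρ x = W x μ * g x ν ρ)
    (hdual : DualOn U g Γ Γs) :
    (∀ x ∈ U, ∀ μ ν ρ : Fin n,
        nonmetricity g Γs μ ν ρ x = -(W x μ) * g x ν ρ)
    ∧ (∀ x ∈ U, ∀ ρ μ ν : Fin n,
        loweredTorsion g Γs ρ μ ν x = -(W x μ) * g x ν ρ + W x ν * g x μ ρ)
    ∧ QuasiStatisticalOn U g Γs := by
  -- key identity: Σ_σ g_{σν} Γs^σ_{ρμ} = Σ_σ g_{σν} Γ^σ_{ρμ} − W_μ g_{νρ}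
  have key : ∀ x ∈ U, ∀ μ ν ρ : Fin n,
      (∑ σ, g x σ ν * Γs σ ρ μ x) = (∑ σ, g x σ ν * Γ σ ρ μ x) - W x μ * g x ν ρ := by
    intro x hx μ ν ρ
    have hd := hdual x hx μ ν ρ
    have hq := hQ x hx μ ν ρ
    unfold nonmetricity at hq
    have h1 : (∑ σ, Γ σ ν μ x * g x σ ρ) = ∑ β, g x β ρ * Γ β ν μ x := by
      exact Finset.sum_congr rfl fun σ _ => mul_comm _ _
    have h2 : (∑ σ, Γ σ ρ μ x * g x σ ν) = ∑ σ, g x σ ν * Γ σ ρ μ x := by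
      exact Finset.sum_congr rfl fun σ _ => mul_comm _ _
    rw [hd, h1, h2] at hq
    linarith
  have gs : ∀ x ∈ U, ∀ a b : Fin n, g x a b = g x b a := by
    intro x hx a b
    exact (hsymm x hx).apply b a
  have hQs : ∀ x ∈ U, ∀ μ ν ρ : Fin n,
      nonmetricity g Γs μ ν ρ x = -(W x μ) * g x ν ρ := by
    intro x hx μ ν ρ
    unfold nonmetricity
    have hd := hdual x hx μ ν ρ
    have h1 : (∑ σ, Γs σ ν μ x * g x σ ρ) = ∑ σ, g x σ ρ * Γs σ ν μ x :=
      Finset.sum_congr rfl fun σ _ => mul_comm _ _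
    have h2 : (∑ σ, Γs σ ρ μ x * g x σ ν) = ∑ σ, g x σ ν * Γs σ ρ μ x :=
      Finset.sum_congr rfl fun σ _ => mul_comm _ _
    have k1 := key x hx μ ρ ν
    have k2 := key x hx μ ν ρ
    have hb : (∑ β, g x β ρ * Γ β ν μ x) = ∑ σ, g x σ ρ * Γ σ ν μ x := rfl
    rw [hd, h1, h2, k1, k2, hb, gs x hx ρ ν]
    ring
  have hT : ∀ x ∈ U, ∀ ρ μ ν : Fin n,
      loweredTorsion g Γs ρ μ ν x = -(W x μ) * g x ν ρ + W x ν * g x μ ρ := by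
    intro x hx ρ μ ν
    unfold loweredTorsion
    have hsplit : (∑ σ, g x ρ σ * (Γs σ ν μ x - Γs σ μ ν x))
        = (∑ σ, g x ρ σ * Γs σ ν μ x) - (∑ σ, g x ρ σ * Γs σ μ ν x) := by
      rw [← Finset.sum_sub_distrib]
      exact Finset.sum_congr rfl fun σ _ => mul_sub _ _ _
    have e1 : (∑ σ, g x ρ σ * Γs σ ν μ x) = ∑ σ, g x σ ρ * Γs σ ν μ x :=
      Finset.sum_congr rfl fun σ _ => by rw [gs x hx ρ σ]
    have e2 : (∑ σ, g x ρ σ * Γs σ μ ν x) = ∑ σ, g x σ ρ * Γs σ μ ν x :=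
      Finset.sum_congr rfl fun σ _ => by rw [gs x hx ρ σ]
    have k1 := key x hx μ ρ ν
    have k2 := key x hx ν ρ μ
    have etf : (∑ σ, g x σ ρ * Γ σ ν μ x) = ∑ σ, g x σ ρ * Γ σ μ ν x :=
      Finset.sum_congr rfl fun σ _ => by rw [hTF x hx σ ν μ]
    rw [hsplit, e1, e2, k1, k2, etf, gs x hx ρ ν, gs x hx ρ μ]
    ring
  refine ⟨hQs, hT, ?_⟩
  intro x hx μ ν ρ
  have q1 := hQs x hx μ ν ρ
  have q2 := hQs x hx ν μ ρ
  have t1 := hT x hx ρ μ ν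
  unfold QuasiStatisticalOn at *
  rw [q1, q2, t1]
  ring
end

section
/- Let Γ be a torsion-free affine connection on a chart U ⊆ ℝⁿ whose non-metricity is of Schrödinger type, Q_{μνρ} = π_μ g_{νρ} − (1/2)(g_{μν} π_ρ + g_{μρ} π_ν) for a smooth covector field π, and let Γ* be its dual connection with respect to g. Then the dual connection has non-metricity Q*_{μνρ} = −π_μ g_{νρ} + (1/2)(g_{μν} π_ρ + g_{μρ} π_ν) and lowered torsion T*_{ρμν} = (3/2)(π_ν g_{μρ} − π_μ g_{νρ}), and the quasi-statistical condition −Q*_{μνρ} + Q*_{νμρ} + T*_{ρμν} = 0 holds on U, so (U, g, Γ*) is a quasi-statistical (quasi-Schrödinger) manifold. -/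
open scoped BigOperators

/-- If Γ is a torsion-free connection on U with Schrödinger non-metricity
`Q_{μνρ} = π_μ g_{νρ} − (1/2)(g_{μν} π_ρ + g_{μρ} π_ν)` and Γ* is its dual with respect
to g, then `Q*_{μνρ} = −π_μ g_{νρ} + (1/2)(g_{μν} π_ρ + g_{μρ} π_ν)`,
`T*_{ρμν} = (3/2)(π_ν g_{μρ} − π_μ g_{νρ})`, and (U, g, Γ*) is a quasi-statistical
(quasi-Schrödinger) manifold. -/
theorem quasiSchrodinger {n : ℕ}
    (U : Set (Fin n → ℝ)) (hU : IsOpen U)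
    (g : (Fin n → ℝ) → Matrix (Fin n) (Fin n) ℝ)
    (hg : ∀ μ ν : Fin n, ContDiffOn ℝ (⊤ : ℕ∞) (fun x => g x μ ν) U)
    (hsymm : ∀ x ∈ U, (g x).IsSymm)
    (π : (Fin n → ℝ) → Fin n → ℝ)
    (hπ : ∀ μ : Fin n, ContDiffOn ℝ (⊤ : ℕ∞) (fun x => π x μ) U)
    (Γ Γs : Fin n → Fin n → Fin n → (Fin n → ℝ) → ℝ)
    (hΓ : ∀ l m k : Fin n, ContDiffOn ℝ (⊤ : ℕ∞) (Γ l m k) U)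
    (hΓs : ∀ l m k : Fin n, ContDiffOn ℝ (⊤ : ℕ∞) (Γs l m k) U)
    (hTF : ∀ x ∈ U, ∀ l m k : Fin n, Γ l m k x = Γ l k m x)
    (hQ : ∀ x ∈ U, ∀ μ ν ρ : Fin n,
      nonmetricity g Γ μ ν ρ x
        = π x μ * g x ν ρ - (1/2) * (g x μ ν * π x ρ + g x μ ρ * π x ν))
    (hdual : DualOn U g Γ Γs) :
    (∀ x ∈ U, ∀ μ ν ρ : Fin n,
        nonmetricity g Γs μ ν ρ x
          = -(π x μ) * g x ν ρ + (1/2) * (g x μ ν * π x ρ + g x μ ρ * π x ν))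
    ∧ (∀ x ∈ U, ∀ ρ μ ν : Fin n,
        loweredTorsion g Γs ρ μ ν x = (3/2) * (π x ν * g x μ ρ - π x μ * g x ν ρ))
    ∧ QuasiStatisticalOn U g Γs := by
  have gsym : ∀ x ∈ U, ∀ a b : Fin n, g x a b = g x b a := by
    intro x hx a b
    simpa using congrFun (congrFun (hsymm x hx) b) a
  have pdsym : ∀ x ∈ U, ∀ μ ν ρ : Fin n,
      pd (fun y => g y ν ρ) μ x = pd (fun y => g y ρ ν) μ x := by
    intro x hx μ ν ρ
    have hev : (fun y => g y ν ρ) =ᶠ[nhds x] (fun y => g y ρ ν) :=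
      Filter.eventuallyEq_of_mem (hU.mem_nhds hx) (fun y hy => gsym y hy ν ρ)
    unfold pd
    rw [hev.fderiv_eq]
  -- Q* = -Q
  have hQs : ∀ x ∈ U, ∀ μ ν ρ : Fin n,
      nonmetricity g Γs μ ν ρ x = - nonmetricity g Γ μ ν ρ x := by
    intro x hx μ ν ρ
    have d1 := hdual x hx μ ν ρ
    have d2 := hdual x hx μ ρ ν
    rw [pdsym x hx μ ρ ν] at d2
    unfold nonmetricity
    simp only [mul_comm] at d1 d2 ⊢
    linarith
  -- T* in terms of Q
  have hTs0 : ∀ x ∈ U, ∀ ρ μ ν : Fin n,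
      loweredTorsion g Γs ρ μ ν x
        = - nonmetricity g Γ μ ν ρ x + nonmetricity g Γ ν μ ρ x := by
    intro x hx ρ μ ν
    have d2 := hdual x hx μ ρ ν
    have d3 := hdual x hx ν ρ μ
    rw [pdsym x hx μ ρ ν] at d2
    rw [pdsym x hx ν ρ μ] at d3
    have tf : ∀ σ : Fin n, Γ σ ν μ x = Γ σ μ ν x := fun σ => hTF x hx σ ν μ
    have e1 : (∑ β, g x ρ β * Γs β ν μ x) = ∑ β, g x β ρ * Γs β ν μ x :=
      Finset.sum_congr rfl fun β _ => by rw [gsym x hx ρ β]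
    have e2 : (∑ β, g x ρ β * Γs β μ ν x) = ∑ β, g x β ρ * Γs β μ ν x :=
      Finset.sum_congr rfl fun β _ => by rw [gsym x hx ρ β]
    unfold loweredTorsion nonmetricity
    simp only [mul_sub, Finset.sum_sub_distrib]
    rw [e1, e2]
    simp only [tf] at *
    simp only [mul_comm] at d2 d3 ⊢
    linarith
  refine ⟨?_, ?_, ?_⟩
  · intro x hx μ ν ρ
    rw [hQs x hx μ ν ρ, hQ x hx μ ν ρ]; ring
  · intro x hx ρ μ ν
    rw [hTs0 x hx ρ μ ν, hQ x hx μ ν ρ, hQ x hx ν μ ρ, gsym x hx ν μ, gsym x hx ν ρ]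
    ring
  · intro x hx μ ν ρ
    rw [hQs x hx μ ν ρ, hQs x hx ν μ ρ, hTs0 x hx ρ μ ν]
    ring
end

section
/- Let g be a smooth metric on a chart U ⊆ ℝⁿ, invertible at every point, π a smooth covector field, and let Γ* be the dual Schrödinger connection, i.e. Γ*^μ_{νρ} = γ^μ_{νρ} + N*^μ_{νρ} with N*^μ_{νρ} = −(1/2) π^μ g_{νρ} − (1/2) π_ρ δ^μ_ν + π_ν δ^μ_ρ, where π^μ = g^{μσ} π_σ. If x : I → U is an autoparallel curve of Γ*, i.e. d²x^μ/dt² + Γ*^μ_{νρ}(x(t)) (dx^ν/dt)(dx^ρ/dt) = 0 on the interval I, then the squared length t ↦ g_{μν}(x(t)) (dx^μ/dt)(dx^ν/dt) is constant on I. -/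
open scoped BigOperators

/-- Levi-Civita (Christoffel) coefficients
`γ^λ_{μν} = (1/2) g^{λσ}(∂_μ g_{σν} + ∂_ν g_{σμ} − ∂_σ g_{μν})`. -/
noncomputable def christoffel {n : ℕ} (g : (Fin n → ℝ) → Matrix (Fin n) (Fin n) ℝ)
    (l μ ν : Fin n) (x : Fin n → ℝ) : ℝ :=
  (1/2) * ∑ σ, (g x)⁻¹ l σ *
    (pd (fun y => g y σ ν) μ x + pd (fun y => g y σ μ) ν x - pd (fun y => g y μ ν) σ x)

/-- Distortion tensor of the dual Schrödinger connection:
`N*^μ_{νρ} = −(1/2) π^μ g_{νρ} − (1/2) π_ρ δ^μ_ν + π_ν δ^μ_ρ`, with `π^μ = g^{μσ} π_σ`. -/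
noncomputable def Nstar {n : ℕ} (g : (Fin n → ℝ) → Matrix (Fin n) (Fin n) ℝ)
    (π : (Fin n → ℝ) → Fin n → ℝ) (μ ν ρ : Fin n) (x : Fin n → ℝ) : ℝ :=
  -(1/2) * (∑ σ, (g x)⁻¹ μ σ * π x σ) * g x ν ρ
    - (1/2) * π x ρ * (if μ = ν then 1 else 0)
    + π x ν * (if μ = ρ then 1 else 0)

lemma delta_contract {n : ℕ} (G Gi : Matrix (Fin n) (Fin n) ℝ) (v : Fin n → ℝ)
    (hGi : ∀ κ σ, ∑ μ, G κ μ * Gi μ σ = if κ = σ then 1 else 0)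
    (hsym : ∀ μ ν, G μ ν = G ν μ) (σ : Fin n) :
    (∑ μ, (∑ κ, G μ κ * v κ) * Gi μ σ) = v σ := by
  calc (∑ μ, (∑ κ, G μ κ * v κ) * Gi μ σ)
      = ∑ μ, ∑ κ, G μ κ * v κ * Gi μ σ := by simp [Finset.sum_mul]
    _ = ∑ κ, ∑ μ, G μ κ * v κ * Gi μ σ := Finset.sum_comm
    _ = ∑ κ, v κ * ∑ μ, G κ μ * Gi μ σ := by
        refine Finset.sum_congr rfl fun κ _ => ?_
        rw [Finset.mul_sum]
        refine Finset.sum_congr rfl fun μ _ => ?_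
        rw [hsym μ κ]; ring
    _ = v σ := by simp [hGi, mul_ite]

lemma triple_comm₂ {n : ℕ} (f : Fin n → Fin n → Fin n → ℝ) :
    ∑ a, ∑ b, ∑ c, f a b c = ∑ a, ∑ c, ∑ b, f a b c :=
  Finset.sum_congr rfl fun _ _ => Finset.sum_comm

lemma key_algebra {n : ℕ} (G Gi : Matrix (Fin n) (Fin n) ℝ) (D : Fin n → Fin n → Fin n → ℝ)
    (p v a : Fin n → ℝ)
    (hGi : ∀ κ σ, ∑ μ, G κ μ * Gi μ σ = if κ = σ then 1 else 0)
    (hsym : ∀ μ ν, G μ ν = G ν μ)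
    (ha : ∀ μ, a μ = -∑ ν, ∑ ρ, ((1/2) * (∑ σ, Gi μ σ * (D ν σ ρ + D ρ σ ν - D σ ν ρ))
        + (-(1/2) * (∑ σ, Gi μ σ * p σ) * G ν ρ
          - (1/2) * p ρ * (if μ = ν then 1 else 0)
          + p ν * (if μ = ρ then 1 else 0))) * v ν * v ρ) :
    ∑ μ, ∑ ν, ((∑ σ, D σ μ ν * v σ) * v μ * v ν
      + G μ ν * a μ * v ν + G μ ν * v μ * a ν) = 0 := by
  obtain ⟨w, hw⟩ : ∃ w : Fin n → ℝ, w = fun μ => ∑ κ, G μ κ * v κ := ⟨_, rfl⟩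
  have hδ : ∀ σ, (∑ μ, w μ * Gi μ σ) = v σ := by
    intro σ; rw [hw]; exact delta_contract G Gi v hGi hsym σ
  have hwv : ∀ μ, (∑ ν, G μ ν * v ν) = w μ := fun μ => by rw [hw]
  -- contraction of the connection coefficients with w
  have hC : ∀ ν ρ, (∑ μ, ((1/2) * (∑ σ, Gi μ σ * (D ν σ ρ + D ρ σ ν - D σ ν ρ))
        + (-(1/2) * (∑ σ, Gi μ σ * p σ) * G ν ρ
          - (1/2) * p ρ * (if μ = ν then 1 else 0)
          + p ν * (if μ = ρ then 1 else 0))) * w μ)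
      = (1/2) * (∑ σ, v σ * (D ν σ ρ + D ρ σ ν - D σ ν ρ))
        - (1/2) * (∑ σ, p σ * v σ) * G ν ρ - (1/2) * p ρ * w ν + p ν * w ρ := by
    intro ν ρ
    have e1 : (∑ μ, (1/2) * (∑ σ, Gi μ σ * (D ν σ ρ + D ρ σ ν - D σ ν ρ)) * w μ)
        = (1/2) * (∑ σ, v σ * (D ν σ ρ + D ρ σ ν - D σ ν ρ)) := by
      calc (∑ μ, (1/2) * (∑ σ, Gi μ σ * (D ν σ ρ + D ρ σ ν - D σ ν ρ)) * w μ)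
          = ∑ μ, ∑ σ, (1/2) * (w μ * Gi μ σ) * (D ν σ ρ + D ρ σ ν - D σ ν ρ) := by
            refine Finset.sum_congr rfl fun μ _ => ?_
            rw [Finset.mul_sum, Finset.sum_mul]
            exact Finset.sum_congr rfl fun σ _ => by ring
        _ = ∑ σ, ∑ μ, (1/2) * (w μ * Gi μ σ) * (D ν σ ρ + D ρ σ ν - D σ ν ρ) :=
            Finset.sum_comm
        _ = ∑ σ, (1/2) * v σ * (D ν σ ρ + D ρ σ ν - D σ ν ρ) := by
            refine Finset.sum_congr rfl fun σ _ => ?_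
            rw [← hδ σ, Finset.mul_sum, Finset.sum_mul]
        _ = (1/2) * (∑ σ, v σ * (D ν σ ρ + D ρ σ ν - D σ ν ρ)) := by
            rw [Finset.mul_sum]; exact Finset.sum_congr rfl fun σ _ => by ring
    have e2 : (∑ μ, (-(1/2) * (∑ σ, Gi μ σ * p σ) * G ν ρ) * w μ)
        = -(1/2) * (∑ σ, p σ * v σ) * G ν ρ := by
      calc (∑ μ, (-(1/2) * (∑ σ, Gi μ σ * p σ) * G ν ρ) * w μ)
          = ∑ μ, ∑ σ, (-(1/2)) * (w μ * Gi μ σ) * p σ * G ν ρ := by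
            refine Finset.sum_congr rfl fun μ _ => ?_
            rw [Finset.mul_sum, Finset.sum_mul, Finset.sum_mul]
            exact Finset.sum_congr rfl fun σ _ => by ring
        _ = ∑ σ, ∑ μ, (-(1/2)) * (w μ * Gi μ σ) * p σ * G ν ρ := Finset.sum_comm
        _ = ∑ σ, (-(1/2)) * v σ * p σ * G ν ρ := by
            refine Finset.sum_congr rfl fun σ _ => ?_
            rw [← hδ σ, Finset.mul_sum, Finset.sum_mul, Finset.sum_mul]
        _ = -(1/2) * (∑ σ, p σ * v σ) * G ν ρ := by
            rw [Finset.mul_sum, Finset.sum_mul]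
            exact Finset.sum_congr rfl fun σ _ => by ring
    have e3 : (∑ μ, (-((1/2) * p ρ) * (if μ = ν then 1 else 0)) * w μ)
        = -(1/2) * p ρ * w ν := by
      simp [ite_mul, mul_ite, Finset.sum_ite_eq']
    have e4 : (∑ μ, (p ν * (if μ = ρ then 1 else 0)) * w μ) = p ν * w ρ := by
      simp [ite_mul, mul_ite, Finset.sum_ite_eq']
    calc (∑ μ, ((1/2) * (∑ σ, Gi μ σ * (D ν σ ρ + D ρ σ ν - D σ ν ρ))
        + (-(1/2) * (∑ σ, Gi μ σ * p σ) * G ν ρ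
          - (1/2) * p ρ * (if μ = ν then 1 else 0)
          + p ν * (if μ = ρ then 1 else 0))) * w μ)
        = (∑ μ, (1/2) * (∑ σ, Gi μ σ * (D ν σ ρ + D ρ σ ν - D σ ν ρ)) * w μ)
          + ((∑ μ, (-(1/2) * (∑ σ, Gi μ σ * p σ) * G ν ρ) * w μ)
            + (∑ μ, (-((1/2) * p ρ) * (if μ = ν then 1 else 0)) * w μ))
          + (∑ μ, (p ν * (if μ = ρ then 1 else 0)) * w μ) := by
          rw [← Finset.sum_add_distrib, ← Finset.sum_add_distrib, ← Finset.sum_add_distrib]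
          exact Finset.sum_congr rfl fun μ _ => by ring
      _ = (1/2) * (∑ σ, v σ * (D ν σ ρ + D ρ σ ν - D σ ν ρ))
        - (1/2) * (∑ σ, p σ * v σ) * G ν ρ - (1/2) * p ρ * w ν + p ν * w ρ := by
          rw [e1, e2, e3, e4]; ring
  -- canonical fully contracted sum
  obtain ⟨Scan, hScan⟩ : ∃ S : ℝ, S = ∑ a, ∑ b, ∑ c, D a b c * v a * v b * v c := ⟨_, rfl⟩
  obtain ⟨P, hPdef⟩ : ∃ P : ℝ, P = ∑ σ, p σ * v σ := ⟨_, rfl⟩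
  obtain ⟨Q, hQdef⟩ : ∃ Q : ℝ, Q = ∑ ν, w ν * v ν := ⟨_, rfl⟩
  -- the three renamed contractions all equal Scan
  have hS1 : (∑ ν, ∑ ρ, ∑ σ, D ν σ ρ * v σ * v ν * v ρ) = Scan := by
    rw [hScan, triple_comm₂ (f := fun ν ρ σ => D ν σ ρ * v σ * v ν * v ρ)]
    exact Finset.sum_congr rfl fun a _ => Finset.sum_congr rfl fun b _ =>
      Finset.sum_congr rfl fun c _ => by ring
  have hS2 : (∑ ν, ∑ ρ, ∑ σ, D ρ σ ν * v σ * v ν * v ρ) = Scan := by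
    rw [hScan]
    calc (∑ ν, ∑ ρ, ∑ σ, D ρ σ ν * v σ * v ν * v ρ)
        = ∑ ρ, ∑ ν, ∑ σ, D ρ σ ν * v σ * v ν * v ρ := Finset.sum_comm
      _ = ∑ ρ, ∑ σ, ∑ ν, D ρ σ ν * v σ * v ν * v ρ :=
          triple_comm₂ (f := fun ρ ν σ => D ρ σ ν * v σ * v ν * v ρ)
      _ = ∑ a, ∑ b, ∑ c, D a b c * v a * v b * v c :=
          Finset.sum_congr rfl fun a _ => Finset.sum_congr rfl fun b _ =>
            Finset.sum_congr rfl fun c _ => by ring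
  have hS3 : (∑ ν, ∑ ρ, ∑ σ, D σ ν ρ * v σ * v ν * v ρ) = Scan := by
    rw [hScan]
    calc (∑ ν, ∑ ρ, ∑ σ, D σ ν ρ * v σ * v ν * v ρ)
        = ∑ ν, ∑ σ, ∑ ρ, D σ ν ρ * v σ * v ν * v ρ :=
          triple_comm₂ (f := fun ν ρ σ => D σ ν ρ * v σ * v ν * v ρ)
      _ = ∑ σ, ∑ ν, ∑ ρ, D σ ν ρ * v σ * v ν * v ρ := Finset.sum_comm
      _ = ∑ a, ∑ b, ∑ c, D a b c * v a * v b * v c :=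
          Finset.sum_congr rfl fun a _ => Finset.sum_congr rfl fun b _ =>
            Finset.sum_congr rfl fun c _ => by ring
  -- the contraction of a with w
  have hA : (∑ μ, a μ * w μ) = -(1/2) * Scan := by
    have step1 : (∑ μ, a μ * w μ)
        = -∑ ν, ∑ ρ, (∑ μ, ((1/2) * (∑ σ, Gi μ σ * (D ν σ ρ + D ρ σ ν - D σ ν ρ))
            + (-(1/2) * (∑ σ, Gi μ σ * p σ) * G ν ρ
              - (1/2) * p ρ * (if μ = ν then 1 else 0)
              + p ν * (if μ = ρ then 1 else 0))) * w μ) * v ν * v ρ := by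
      calc (∑ μ, a μ * w μ)
          = ∑ μ, -(∑ ν, ∑ ρ, ((1/2) * (∑ σ, Gi μ σ * (D ν σ ρ + D ρ σ ν - D σ ν ρ))
              + (-(1/2) * (∑ σ, Gi μ σ * p σ) * G ν ρ
                - (1/2) * p ρ * (if μ = ν then 1 else 0)
                + p ν * (if μ = ρ then 1 else 0))) * v ν * v ρ * w μ) := by
            refine Finset.sum_congr rfl fun μ _ => ?_
            rw [ha μ, neg_mul, Finset.sum_mul, neg_inj]
            refine Finset.sum_congr rfl fun ν _ => ?_
            rw [Finset.sum_mul]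
        _ = -∑ μ, ∑ ν, ∑ ρ, ((1/2) * (∑ σ, Gi μ σ * (D ν σ ρ + D ρ σ ν - D σ ν ρ))
              + (-(1/2) * (∑ σ, Gi μ σ * p σ) * G ν ρ
                - (1/2) * p ρ * (if μ = ν then 1 else 0)
                + p ν * (if μ = ρ then 1 else 0))) * v ν * v ρ * w μ := by
            rw [← Finset.sum_neg_distrib]
        _ = -∑ ν, ∑ μ, ∑ ρ, ((1/2) * (∑ σ, Gi μ σ * (D ν σ ρ + D ρ σ ν - D σ ν ρ))
              + (-(1/2) * (∑ σ, Gi μ σ * p σ) * G ν ρ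
                - (1/2) * p ρ * (if μ = ν then 1 else 0)
                + p ν * (if μ = ρ then 1 else 0))) * v ν * v ρ * w μ := by
            rw [neg_inj]; exact Finset.sum_comm
        _ = -∑ ν, ∑ ρ, ∑ μ, ((1/2) * (∑ σ, Gi μ σ * (D ν σ ρ + D ρ σ ν - D σ ν ρ))
              + (-(1/2) * (∑ σ, Gi μ σ * p σ) * G ν ρ
                - (1/2) * p ρ * (if μ = ν then 1 else 0)
                + p ν * (if μ = ρ then 1 else 0))) * v ν * v ρ * w μ := by
            rw [neg_inj]
            exact Finset.sum_congr rfl fun ν _ => Finset.sum_comm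
        _ = -∑ ν, ∑ ρ, (∑ μ, ((1/2) * (∑ σ, Gi μ σ * (D ν σ ρ + D ρ σ ν - D σ ν ρ))
            + (-(1/2) * (∑ σ, Gi μ σ * p σ) * G ν ρ
              - (1/2) * p ρ * (if μ = ν then 1 else 0)
              + p ν * (if μ = ρ then 1 else 0))) * w μ) * v ν * v ρ := by
            rw [neg_inj]
            refine Finset.sum_congr rfl fun ν _ => Finset.sum_congr rfl fun ρ _ => ?_
            rw [Finset.sum_mul, Finset.sum_mul]
            exact Finset.sum_congr rfl fun μ _ => by ring
    rw [step1]
    have step2 : (∑ ν, ∑ ρ, (∑ μ, ((1/2) * (∑ σ, Gi μ σ * (D ν σ ρ + D ρ σ ν - D σ ν ρ))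
            + (-(1/2) * (∑ σ, Gi μ σ * p σ) * G ν ρ
              - (1/2) * p ρ * (if μ = ν then 1 else 0)
              + p ν * (if μ = ρ then 1 else 0))) * w μ) * v ν * v ρ)
        = ∑ ν, ∑ ρ, ((1/2) * (∑ σ, v σ * (D ν σ ρ + D ρ σ ν - D σ ν ρ))
            - (1/2) * P * G ν ρ - (1/2) * p ρ * w ν + p ν * w ρ) * v ν * v ρ := by
      refine Finset.sum_congr rfl fun ν _ => Finset.sum_congr rfl fun ρ _ => ?_
      rw [hC ν ρ, hPdef]
    rw [step2]
    have split0 : (∑ ν, ∑ ρ, ((1/2) * (∑ σ, v σ * (D ν σ ρ + D ρ σ ν - D σ ν ρ))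
            - (1/2) * P * G ν ρ - (1/2) * p ρ * w ν + p ν * w ρ) * v ν * v ρ)
        = (∑ ν, ∑ ρ, (1/2) * (∑ σ, v σ * (D ν σ ρ + D ρ σ ν - D σ ν ρ)) * v ν * v ρ)
          - (∑ ν, ∑ ρ, (1/2) * P * G ν ρ * v ν * v ρ)
          - (∑ ν, ∑ ρ, (1/2) * p ρ * w ν * v ν * v ρ)
          + (∑ ν, ∑ ρ, p ν * w ρ * v ν * v ρ) := by
      rw [← Finset.sum_sub_distrib, ← Finset.sum_sub_distrib, ← Finset.sum_add_distrib]
      refine Finset.sum_congr rfl fun ν _ => ?_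
      rw [← Finset.sum_sub_distrib, ← Finset.sum_sub_distrib, ← Finset.sum_add_distrib]
      exact Finset.sum_congr rfl fun ρ _ => by ring
    rw [split0]
    have hB1 : (∑ ν, ∑ ρ, (1/2) * (∑ σ, v σ * (D ν σ ρ + D ρ σ ν - D σ ν ρ)) * v ν * v ρ)
        = (1/2) * Scan := by
      have e : (∑ ν, ∑ ρ, (1/2) * (∑ σ, v σ * (D ν σ ρ + D ρ σ ν - D σ ν ρ)) * v ν * v ρ)
          = ∑ ν, ∑ ρ, ∑ σ, ((1/2) * (D ν σ ρ * v σ * v ν * v ρ)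
              + (1/2) * (D ρ σ ν * v σ * v ν * v ρ)
              - (1/2) * (D σ ν ρ * v σ * v ν * v ρ)) := by
        refine Finset.sum_congr rfl fun ν _ => Finset.sum_congr rfl fun ρ _ => ?_
        rw [Finset.mul_sum, Finset.sum_mul, Finset.sum_mul]
        exact Finset.sum_congr rfl fun σ _ => by ring
      rw [e]
      simp only [Finset.sum_add_distrib, Finset.sum_sub_distrib, ← Finset.mul_sum]
      rw [hS1, hS2, hS3]; ring
    have hB2 : (∑ ν, ∑ ρ, (1/2) * P * G ν ρ * v ν * v ρ) = (1/2) * P * Q := by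
      have e : ∀ ν, (∑ ρ, (1/2) * P * G ν ρ * v ν * v ρ) = (1/2) * P * (w ν * v ν) := by
        intro ν; rw [hw]
        simp only
        rw [Finset.sum_mul, Finset.mul_sum]
        exact Finset.sum_congr rfl fun ρ _ => by ring
      rw [Finset.sum_congr rfl fun ν _ => e ν, hQdef, Finset.mul_sum]
    have hB3 : (∑ ν, ∑ ρ, (1/2) * p ρ * w ν * v ν * v ρ) = Q * ((1/2) * P) := by
      have e : ∀ ν, (∑ ρ, (1/2) * p ρ * w ν * v ν * v ρ)
          = (w ν * v ν) * ((1/2) * P) := by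
        intro ν
        rw [hPdef, Finset.mul_sum, Finset.mul_sum]
        exact Finset.sum_congr rfl fun ρ _ => by ring
      rw [Finset.sum_congr rfl fun ν _ => e ν, ← Finset.sum_mul, ← hQdef]
    have hB4 : (∑ ν, ∑ ρ, p ν * w ρ * v ν * v ρ) = P * Q := by
      have e : ∀ ν, (∑ ρ, p ν * w ρ * v ν * v ρ) = (p ν * v ν) * Q := by
        intro ν
        rw [hQdef, Finset.mul_sum]
        exact Finset.sum_congr rfl fun ρ _ => by ring
      rw [Finset.sum_congr rfl fun ν _ => e ν, ← Finset.sum_mul, ← hPdef]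
    rw [hB1, hB2, hB3, hB4]; ring
  -- assemble the three pieces of the goal
  have hterm1 : (∑ μ, ∑ ν, (∑ σ, D σ μ ν * v σ) * v μ * v ν) = Scan := by
    have e : (∑ μ, ∑ ν, (∑ σ, D σ μ ν * v σ) * v μ * v ν)
        = ∑ μ, ∑ ν, ∑ σ, D σ μ ν * v σ * v μ * v ν := by
      refine Finset.sum_congr rfl fun μ _ => Finset.sum_congr rfl fun ν _ => ?_
      rw [Finset.sum_mul, Finset.sum_mul]
    rw [e, hScan]
    calc (∑ μ, ∑ ν, ∑ σ, D σ μ ν * v σ * v μ * v ν)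
        = ∑ μ, ∑ σ, ∑ ν, D σ μ ν * v σ * v μ * v ν :=
          triple_comm₂ (f := fun μ ν σ => D σ μ ν * v σ * v μ * v ν)
      _ = ∑ σ, ∑ μ, ∑ ν, D σ μ ν * v σ * v μ * v ν := Finset.sum_comm
      _ = ∑ a, ∑ b, ∑ c, D a b c * v a * v b * v c :=
          Finset.sum_congr rfl fun a _ => Finset.sum_congr rfl fun b _ =>
            Finset.sum_congr rfl fun c _ => by ring
  have hterm2 : (∑ μ, ∑ ν, G μ ν * a μ * v ν) = ∑ μ, a μ * w μ := by
    refine Finset.sum_congr rfl fun μ _ => ?_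
    rw [hw]
    simp only
    rw [Finset.mul_sum]
    exact Finset.sum_congr rfl fun ν _ => by ring
  have hterm3 : (∑ μ, ∑ ν, G μ ν * v μ * a ν) = ∑ μ, a μ * w μ := by
    rw [Finset.sum_comm]
    refine Finset.sum_congr rfl fun ν _ => ?_
    rw [hw]
    simp only
    rw [Finset.mul_sum]
    refine Finset.sum_congr rfl fun μ _ => ?_
    rw [hsym μ ν]; ring
  calc (∑ μ, ∑ ν, ((∑ σ, D σ μ ν * v σ) * v μ * v ν
        + G μ ν * a μ * v ν + G μ ν * v μ * a ν))
      = (∑ μ, ∑ ν, (∑ σ, D σ μ ν * v σ) * v μ * v ν)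
        + (∑ μ, ∑ ν, G μ ν * a μ * v ν)
        + (∑ μ, ∑ ν, G μ ν * v μ * a ν) := by
        rw [← Finset.sum_add_distrib, ← Finset.sum_add_distrib]
        refine Finset.sum_congr rfl fun μ _ => ?_
        rw [← Finset.sum_add_distrib, ← Finset.sum_add_distrib]
    _ = Scan + (-(1/2) * Scan) + (-(1/2) * Scan) := by
        rw [hterm1, hterm2, hterm3, hA]
    _ = 0 := by ring

lemma fderiv_apply_eq_sum_pd {n : ℕ} (f : (Fin n → ℝ) → ℝ) (z : Fin n → ℝ)
    (V : Fin n → ℝ) :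
    fderiv ℝ f z V = ∑ σ, pd f σ z * V σ := by
  have hV : V = ∑ σ, Pi.single σ (V σ) := (Finset.univ_sum_single V).symm
  calc fderiv ℝ f z V = fderiv ℝ f z (∑ σ, Pi.single σ (V σ)) := by rw [← hV]
    _ = ∑ σ, fderiv ℝ f z (Pi.single σ (V σ)) := map_sum _ _ _
    _ = ∑ σ, pd f σ z * V σ := by
        refine Finset.sum_congr rfl fun σ _ => ?_
        have : Pi.single σ (V σ) = V σ • (Pi.single σ (1 : ℝ) : Fin n → ℝ) := by
          ext j
          by_cases h : j = σ <;> simp [Pi.single_apply, h]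
        rw [this, map_smul, smul_eq_mul, pd]; ring

/-- Autoparallel curves of the dual Schrödinger connection
`Γ*^μ_{νρ} = γ^μ_{νρ} + N*^μ_{νρ}` preserve the squared length
`g_{μν} ẋ^μ ẋ^ν` along the curve. -/
theorem dual_schrodinger_autoparallel_length_preserving {n : ℕ}
    (U : Set (Fin n → ℝ)) (hU : IsOpen U)
    (g : (Fin n → ℝ) → Matrix (Fin n) (Fin n) ℝ)
    (hg : ∀ μ ν : Fin n, ContDiffOn ℝ (⊤ : ℕ∞) (fun x => g x μ ν) U)
    (hsymm : ∀ x ∈ U, (g x).IsSymm)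
    (hinv : ∀ x ∈ U, IsUnit (g x).det)
    (π : (Fin n → ℝ) → Fin n → ℝ)
    (hπ : ∀ μ : Fin n, ContDiffOn ℝ (⊤ : ℕ∞) (fun x => π x μ) U)
    (a b : ℝ) (x : ℝ → Fin n → ℝ)
    (hxU : ∀ t ∈ Set.Ioo a b, x t ∈ U)
    (hx1 : ∀ (μ : Fin n), ∀ t ∈ Set.Ioo a b, DifferentiableAt ℝ (fun s => x s μ) t)
    (hx2 : ∀ (μ : Fin n), ∀ t ∈ Set.Ioo a b,
      DifferentiableAt ℝ (deriv fun s => x s μ) t)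
    (hauto : ∀ t ∈ Set.Ioo a b, ∀ μ : Fin n,
      deriv (deriv fun s => x s μ) t
        + ∑ ν, ∑ ρ, (christoffel g μ ν ρ (x t) + Nstar g π μ ν ρ (x t))
            * deriv (fun s => x s ν) t * deriv (fun s => x s ρ) t = 0) :
    ∀ t₁ ∈ Set.Ioo a b, ∀ t₂ ∈ Set.Ioo a b,
      (∑ μ, ∑ ν, g (x t₁) μ ν * deriv (fun s => x s μ) t₁ * deriv (fun s => x s ν) t₁)
        = ∑ μ, ∑ ν, g (x t₂) μ ν * deriv (fun s => x s μ) t₂ * deriv (fun s => x s ν) t₂ := by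
  obtain ⟨L, hL⟩ : ∃ L : ℝ → ℝ, L = fun s =>
      ∑ μ, ∑ ν, g (x s) μ ν * deriv (fun s' => x s' μ) s * deriv (fun s' => x s' ν) s :=
    ⟨_, rfl⟩
  have hL0 : ∀ t ∈ Set.Ioo a b, HasDerivAt L 0 t := by
    intro t ht
    obtain ⟨v, hv⟩ : ∃ v : Fin n → ℝ, v = fun μ => deriv (fun s => x s μ) t := ⟨_, rfl⟩
    obtain ⟨A, hA⟩ : ∃ A : Fin n → ℝ, A = fun μ => deriv (deriv fun s => x s μ) t := ⟨_, rfl⟩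
    -- derivative of the curve as a map into ℝⁿ
    have hxd : HasDerivAt (fun s => x s) v t := by
      rw [hv]; exact hasDerivAt_pi.2 fun μ => ((hx1 μ t ht).hasDerivAt)
    -- derivative of g along the curve
    have hgx : ∀ μ ν, HasDerivAt (fun s => g (x s) μ ν)
        (∑ σ, pd (fun y => g y μ ν) σ (x t) * v σ) t := by
      intro μ ν
      have hct : ContDiffAt ℝ (⊤ : ℕ∞) (fun y => g y μ ν) (x t) :=
        (hg μ ν).contDiffAt (hU.mem_nhds (hxU t ht))
      have hdf : DifferentiableAt ℝ (fun y => g y μ ν) (x t) :=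
        hct.differentiableAt (by simp)
      have hF := hdf.hasFDerivAt.comp_hasDerivAt t hxd
      refine hF.congr_deriv ?_
      rw [fderiv_apply_eq_sum_pd]
    have hvd : ∀ μ, HasDerivAt (fun s => deriv (fun s' => x s' μ) s) (A μ) t := by
      intro μ; rw [hA]; exact (hx2 μ t ht).hasDerivAt
    -- derivative of L
    have hLd : HasDerivAt L (∑ μ, ∑ ν, ((∑ σ,
        (fun d a' b' => pd (fun y => g y a' b') d (x t)) σ μ ν * v σ) * v μ * v ν
        + g (x t) μ ν * A μ * v ν + g (x t) μ ν * v μ * A ν)) t := by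
      rw [hL]
      refine HasDerivAt.fun_sum fun μ _ => HasDerivAt.fun_sum fun ν _ => ?_
      have h3 := ((hgx μ ν).fun_mul (hvd μ)).fun_mul (hvd ν)
      refine h3.congr_deriv ?_
      simp only [hv]
      ring
    -- the derivative vanishes by the algebraic identity
    have hzero : (∑ μ, ∑ ν, ((∑ σ,
        (fun d a' b' => pd (fun y => g y a' b') d (x t)) σ μ ν * v σ) * v μ * v ν
        + g (x t) μ ν * A μ * v ν + g (x t) μ ν * v μ * A ν)) = 0 := by
      refine key_algebra (g (x t)) ((g (x t))⁻¹)
        (fun d a' b' => pd (fun y => g y a' b') d (x t)) (π (x t)) v A ?_ ?_ ?_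
      · intro κ σ
        have := Matrix.mul_nonsing_inv (g (x t)) (hinv (x t) (hxU t ht))
        calc (∑ μ, g (x t) κ μ * (g (x t))⁻¹ μ σ)
            = (g (x t) * (g (x t))⁻¹) κ σ := (Matrix.mul_apply).symm
          _ = (1 : Matrix (Fin n) (Fin n) ℝ) κ σ := by rw [this]
          _ = if κ = σ then 1 else 0 := Matrix.one_apply
      · intro μ ν
        exact (hsymm (x t) (hxU t ht)).apply ν μ
      · intro μ
        have hv' : ∀ κ, v κ = deriv (fun s => x s κ) t := fun κ => by rw [hv]
        have hA' : ∀ κ, A κ = deriv (deriv fun s => x s κ) t := fun κ => by rw [hA]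
        have h := hauto t ht μ
        simp only [christoffel, Nstar, ← hv'] at h
        rw [hA' μ]
        linarith [h]
    rw [← hzero]
    exact hLd
  -- conclude constancy
  intro t₁ ht₁ t₂ ht₂
  have key : ∀ s₁ ∈ Set.Ioo a b, ∀ s₂ ∈ Set.Ioo a b, s₁ ≤ s₂ → L s₂ = L s₁ := by
    intro s₁ hs₁ s₂ hs₂ h12
    have hsub : Set.Icc s₁ s₂ ⊆ Set.Ioo a b := fun s hs =>
      ⟨lt_of_lt_of_le hs₁.1 hs.1, lt_of_le_of_lt hs.2 hs₂.2⟩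
    have hcont : ContinuousOn L (Set.Icc s₁ s₂) := fun s hs =>
      ((hL0 s (hsub hs)).continuousAt).continuousWithinAt
    have hderiv : ∀ s ∈ Set.Ico s₁ s₂, HasDerivWithinAt L 0 (Set.Ici s) s := fun s hs =>
      (hL0 s (hsub ⟨hs.1, le_of_lt hs.2⟩)).hasDerivWithinAt
    exact constant_of_has_deriv_right_zero hcont hderiv s₂ ⟨h12, le_refl _⟩
  have : L t₁ = L t₂ := by
    rcases le_total t₁ t₂ with h | h
    · exact (key t₁ ht₁ t₂ ht₂ h).symm
    · exact key t₂ ht₂ t₁ ht₁ h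
  rw [hL] at this
  exact this
end

section
/- Let H : I → ℝ be differentiable and ψ : I → ℝ be twice differentiable on an open interval I, and define ρ_eff := (1/(8π))((9/8)ψ̇ + (9/8)Hψ − (3/16)ψ²) and p_eff := (1/(8π))(−(3/8)ψ̇ − (15/8)Hψ + (5/16)ψ²). Then the effective dark-energy conservation equation ρ̇_eff + 3H(ρ_eff + p_eff) = 0 holds on I if and only if the torsion vector satisfies the evolution equation ψ̈ + Ḣψ + 3Hψ̇ − (1/3)ψψ̇ − 2H²ψ + (1/3)Hψ² = 0 on I. -/
open Real

/-!
Differentiating `ρ_eff` brings in `ψ̈` and `Ḣ`; after collecting terms,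
`ρ̇_eff + 3H(ρ_eff + p_eff)` is exactly `9/(64π)` times the left-hand side of the torsion
evolution equation, and `9/(64π) ≠ 0`.
-/

theorem hasDerivAt_torsion_density {H ψ : ℝ → ℝ} {t : ℝ} (k a b c : ℝ)
    (hH : DifferentiableAt ℝ H t) (hψ : DifferentiableAt ℝ ψ t)
    (hψ' : DifferentiableAt ℝ (deriv ψ) t) :
    HasDerivAt (fun s => k * (a * deriv ψ s + b * H s * ψ s - c * ψ s ^ 2))
      (k * (a * deriv (deriv ψ) t + (b * deriv H t * ψ t + b * H t * deriv ψ t)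
        - c * (2 * ψ t * deriv ψ t))) t := by
  have hsq : HasDerivAt (fun s => ψ s ^ 2) (2 * ψ t * deriv ψ t) t := by
    simpa using hψ.hasDerivAt.fun_pow 2
  have hprod := (hH.hasDerivAt.const_mul b).fun_mul hψ.hasDerivAt
  exact (((hψ'.hasDerivAt.const_mul a).fun_add hprod).fun_sub (hsq.const_mul c)).const_mul k

theorem effective_conservation_residual_eq (k h h' y y' y'' : ℝ) :
    k * ((9/8) * y'' + ((9/8) * h' * y + (9/8) * h * y') - (3/16) * (2 * y * y'))
      + 3 * h * (k * ((9/8) * y' + (9/8) * h * y - (3/16) * y ^ 2)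
        + k * (-(3/8) * y' - (15/8) * h * y + (5/16) * y ^ 2))
      = (9/8) * k * (y'' + h' * y + 3 * h * y' - (1/3) * y * y' - 2 * h ^ 2 * y
        + (1/3) * h * y ^ 2) := by
  ring

theorem effective_conservation_iff_torsion_evolution_general
    (I : Set ℝ)
    (H ψ : ℝ → ℝ)
    (hH : ∀ t ∈ I, DifferentiableAt ℝ H t)
    (hψ : ∀ t ∈ I, DifferentiableAt ℝ ψ t)
    (hψ' : ∀ t ∈ I, DifferentiableAt ℝ (deriv ψ) t)
    (ρeff peff : ℝ → ℝ)
    (hρeff : ρeff = fun t =>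
      (1 / (8 * π)) * ((9/8) * deriv ψ t + (9/8) * H t * ψ t - (3/16) * (ψ t) ^ 2))
    (hpeff : peff = fun t =>
      (1 / (8 * π)) * (-(3/8) * deriv ψ t - (15/8) * H t * ψ t + (5/16) * (ψ t) ^ 2)) :
    (∀ t ∈ I, deriv ρeff t + 3 * H t * (ρeff t + peff t) = 0)
      ↔ (∀ t ∈ I,
          deriv (deriv ψ) t + deriv H t * ψ t + 3 * H t * deriv ψ t
            - (1/3) * ψ t * deriv ψ t - 2 * (H t) ^ 2 * ψ t
            + (1/3) * H t * (ψ t) ^ 2 = 0) := by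
  subst hρeff hpeff
  have hk : (9/8) * (1 / (8 * π)) ≠ 0 := by positivity
  refine forall₂_congr fun t ht => ?_
  rw [(hasDerivAt_torsion_density _ _ _ _ (hH t ht) (hψ t ht) (hψ' t ht)).deriv]
  beta_reduce
  rw [effective_conservation_residual_eq, mul_eq_zero, or_iff_right hk]

/-- With `ρ_eff = (1/(8π))((9/8)ψ̇ + (9/8)Hψ − (3/16)ψ²)` and
`p_eff = (1/(8π))(−(3/8)ψ̇ − (15/8)Hψ + (5/16)ψ²)`, the effective dark-energy
conservation equation `ρ̇_eff + 3H(ρ_eff + p_eff) = 0` holds on I if and only if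
the torsion vector satisfies
`ψ̈ + Ḣψ + 3Hψ̇ − (1/3)ψψ̇ − 2H²ψ + (1/3)Hψ² = 0` on I. -/
theorem effective_conservation_iff_torsion_evolution
    (I : Set ℝ) (hI : IsOpen I)
    (H ψ : ℝ → ℝ)
    (hH : ∀ t ∈ I, DifferentiableAt ℝ H t)
    (hψ : ∀ t ∈ I, DifferentiableAt ℝ ψ t)
    (hψ' : ∀ t ∈ I, DifferentiableAt ℝ (deriv ψ) t)
    (ρeff peff : ℝ → ℝ)
    (hρeff : ρeff = fun t =>
      (1 / (8 * π)) * ((9/8) * deriv ψ t + (9/8) * H t * ψ t - (3/16) * (ψ t) ^ 2))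
    (hpeff : peff = fun t =>
      (1 / (8 * π)) * (-(3/8) * deriv ψ t - (15/8) * H t * ψ t + (5/16) * (ψ t) ^ 2)) :
    (∀ t ∈ I, deriv ρeff t + 3 * H t * (ρeff t + peff t) = 0)
      ↔ (∀ t ∈ I,
          deriv (deriv ψ) t + deriv H t * ψ t + 3 * H t * deriv ψ t
            - (1/3) * ψ t * deriv ψ t - 2 * (H t) ^ 2 * ψ t
            + (1/3) * H t * (ψ t) ^ 2 = 0) :=
  effective_conservation_iff_torsion_evolution_general I H ψ hH hψ hψ' ρeff peff hρeff hpeff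
end

section
/- Let H₀ > 0 and α ∈ ℝ, and let I be an open interval of t on which (√15/6)(H₀ t + α) ∈ (−π/2, π/2). Then the function ψ(t) = 3H₀ (1 + (1/√15) tan((√15/6)(H₀ t + α))) satisfies the de Sitter torsion evolution equation ψ̇ + 5H₀ ψ − (5/6) ψ² − 8H₀² = 0 at every t ∈ I. -/
open Real

/-! Completing the square turns the equation into the Riccati equation
`ψ̇ = (5/6)(ψ - 3H₀)² + H₀²/2`, and `y = √(m/k) tan(√(km) t + d)` solves `ẏ = k y² + m`
because `tan' = 1 + tan²`; here `√(m/k) = 3H₀/√15` and `√(km) = √15 H₀/6`. -/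

theorem Real.hasDerivAt_tan_eq_one_add_tan_sq {x : ℝ} (h : cos x ≠ 0) :
    HasDerivAt tan (1 + tan x ^ 2) x := by
  simpa [one_div, ← inv_one_add_tan_sq h] using hasDerivAt_tan h

theorem hasDerivAt_const_add_mul_tan_affine (a b c d t : ℝ) (h : cos (c * t + d) ≠ 0) :
    HasDerivAt (fun s => a + b * tan (c * s + d)) (b * c * (1 + tan (c * t + d) ^ 2)) t := by
  have hinner : HasDerivAt (fun s => c * s + d) c t := by
    simpa using ((hasDerivAt_id t).const_mul c).add_const d
  have htan := (hasDerivAt_tan_eq_one_add_tan_sq h).comp t hinner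
  exact ((htan.const_mul b).const_add a).congr_deriv (by ring)

theorem deSitter_torsion_solution_general
    (H₀ α : ℝ)
    (I : Set ℝ)
    (hrange : ∀ t ∈ I,
      (Real.sqrt 15 / 6) * (H₀ * t + α) ∈ Set.Ioo (-(π/2)) (π/2))
    (ψ : ℝ → ℝ)
    (hψ : ψ = fun t =>
      3 * H₀ * (1 + (1 / Real.sqrt 15) * Real.tan ((Real.sqrt 15 / 6) * (H₀ * t + α)))) :
    ∀ t ∈ I,
      deriv ψ t + 5 * H₀ * ψ t - (5/6) * (ψ t) ^ 2 - 8 * H₀ ^ 2 = 0 := by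
  intro t ht
  have hsqrt : √15 ^ 2 = 15 := sq_sqrt (by norm_num)
  have hsqrt_ne : √15 ≠ 0 := by positivity
  have hψ_affine : ψ = fun s => 3 * H₀ + 3 * H₀ / √15 * tan (√15 / 6 * H₀ * s + √15 / 6 * α) := by
    rw [hψ]
    ext s
    ring_nf
  have hcos : cos (√15 / 6 * H₀ * t + √15 / 6 * α) ≠ 0 := by
    have := cos_pos_of_mem_Ioo (hrange t ht)
    ring_nf at this ⊢
    exact this.ne'
  have hderiv := hasDerivAt_const_add_mul_tan_affine (3 * H₀) (3 * H₀ / √15) _ _ t hcos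
  rw [hψ_affine, hderiv.deriv]
  beta_reduce
  generalize tan (√15 / 6 * H₀ * t + √15 / 6 * α) = T
  field_simp
  linear_combination 3 * H₀ ^ 2 * T ^ 2 * hsqrt

/-- The function `ψ(t) = 3H₀(1 + (1/√15) tan((√15/6)(H₀ t + α)))`
satisfies the de Sitter torsion evolution equation
`ψ̇ + 5H₀ψ − (5/6)ψ² − 8H₀² = 0` on any open interval where the argument of the
tangent lies in (−π/2, π/2). -/
theorem deSitter_torsion_solution
    (H₀ α : ℝ) (hH₀ : 0 < H₀)
    (I : Set ℝ) (hI : IsOpen I)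
    (hrange : ∀ t ∈ I,
      (Real.sqrt 15 / 6) * (H₀ * t + α) ∈ Set.Ioo (-(π/2)) (π/2))
    (ψ : ℝ → ℝ)
    (hψ : ψ = fun t =>
      3 * H₀ * (1 + (1 / Real.sqrt 15) * Real.tan ((Real.sqrt 15 / 6) * (H₀ * t + α)))) :
    ∀ t ∈ I,
      deriv ψ t + 5 * H₀ * ψ t - (5/6) * (ψ t) ^ 2 - 8 * H₀ ^ 2 = 0 :=
  deSitter_torsion_solution_general H₀ α I hrange ψ hψ
end

section
/- Let H₀ > 0 and α ∈ ℝ, let I be an open interval of t on which θ(t) := (√15/6)(H₀ t + α) ∈ (−π/2, π/2), and let ψ(t) = 3H₀ (1 + (1/√15) tan θ(t)). Define ρ(t) by 8π ρ(t) = (3/20) H₀² (8 − 3 / cos² θ(t)). Then the first generalized Friedmann equation with constant Hubble function H = H₀ holds on I: 3H₀² = 8π ρ(t) + (9/8) ψ̇(t) + (9/8) H₀ ψ(t) − (3/16) ψ(t)² for every t ∈ I. -/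
/-!
Differentiating, `ψ̇ = (H₀²/2) sec² θ`, and `sec² θ = 1 + tan² θ` turns `ρ` into a polynomial in
`tan θ` as well; the Friedmann equation is then a polynomial identity in `tan θ` and `√15`.
-/

open Real

theorem HasDerivAt.tan {f : ℝ → ℝ} {f' x : ℝ} (hf : HasDerivAt f f' x)
    (hcos : Real.cos (f x) ≠ 0) :
    HasDerivAt (fun y => Real.tan (f y)) ((1 + Real.tan (f x) ^ 2) * f') x := by
  rw [← inv_inv (1 + Real.tan (f x) ^ 2), Real.inv_one_add_tan_sq hcos, ← one_div]
  exact (Real.hasDerivAt_tan hcos).comp x hf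

theorem hasDerivAt_deSitterTorsion (H₀ α t : ℝ)
    (hcos : cos (√15 / 6 * (H₀ * t + α)) ≠ 0) :
    HasDerivAt (fun t => 3 * H₀ * (1 + 1 / √15 * tan (√15 / 6 * (H₀ * t + α))))
      (H₀ ^ 2 / 2 * (1 + tan (√15 / 6 * (H₀ * t + α)) ^ 2)) t := by
  have hphase : HasDerivAt (fun t => √15 / 6 * (H₀ * t + α)) (√15 / 6 * H₀) t := by
    simpa using (((hasDerivAt_id t).const_mul H₀).add_const α).const_mul (√15 / 6)
  refine (((hphase.tan hcos).const_mul (1 / √15)).const_add 1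
    |>.const_mul (3 * H₀)).congr_deriv ?_
  field_simp
  ring

theorem deSitter_first_friedmann_general
    (H₀ α : ℝ)
    (I : Set ℝ)
    (θ : ℝ → ℝ) (hθ : θ = fun t => (Real.sqrt 15 / 6) * (H₀ * t + α))
    (hrange : ∀ t ∈ I, θ t ∈ Set.Ioo (-(π/2)) (π/2))
    (ψ : ℝ → ℝ)
    (hψ : ψ = fun t => 3 * H₀ * (1 + (1 / Real.sqrt 15) * Real.tan (θ t)))
    (ρ : ℝ → ℝ)
    (hρ : ∀ t, 8 * π * ρ t = (3/20) * H₀ ^ 2 * (8 - 3 / (Real.cos (θ t)) ^ 2)) :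
    ∀ t ∈ I,
      3 * H₀ ^ 2
        = 8 * π * ρ t + (9/8) * deriv ψ t + (9/8) * H₀ * ψ t - (3/16) * (ψ t) ^ 2 := by
  intro t ht
  subst hθ hψ
  have hcos : cos (√15 / 6 * (H₀ * t + α)) ≠ 0 := (cos_pos_of_mem_Ioo (hrange t ht)).ne'
  rw [(hasDerivAt_deSitterTorsion H₀ α t hcos).deriv, hρ t]
  beta_reduce
  set x := √15 / 6 * (H₀ * t + α)
  have hsec : 3 / cos x ^ 2 = 3 * (1 + tan x ^ 2) := by
    rw [div_eq_mul_inv, ← inv_one_add_tan_sq hcos, inv_inv]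
  have hsqrt : √15 ^ 2 = 15 := sq_sqrt (by norm_num)
  rw [hsec]
  field_simp
  linear_combination (-576 * H₀ ^ 2 * tan x ^ 2) * hsqrt

/-- With `θ(t) = (√15/6)(H₀ t + α)`,
`ψ(t) = 3H₀(1 + (1/√15) tan θ(t))` and `8π ρ(t) = (3/20) H₀² (8 − 3/cos² θ(t))`,
the first generalized Friedmann equation with constant Hubble function `H = H₀` holds:
`3H₀² = 8π ρ + (9/8)ψ̇ + (9/8)H₀ψ − (3/16)ψ²` on any open interval where
`θ(t) ∈ (−π/2, π/2)`. -/
theorem deSitter_first_friedmann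
    (H₀ α : ℝ) (hH₀ : 0 < H₀)
    (I : Set ℝ) (hI : IsOpen I)
    (θ : ℝ → ℝ) (hθ : θ = fun t => (Real.sqrt 15 / 6) * (H₀ * t + α))
    (hrange : ∀ t ∈ I, θ t ∈ Set.Ioo (-(π/2)) (π/2))
    (ψ : ℝ → ℝ)
    (hψ : ψ = fun t => 3 * H₀ * (1 + (1 / Real.sqrt 15) * Real.tan (θ t)))
    (ρ : ℝ → ℝ)
    (hρ : ∀ t, 8 * π * ρ t = (3/20) * H₀ ^ 2 * (8 - 3 / (Real.cos (θ t)) ^ 2)) :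
    ∀ t ∈ I,
      3 * H₀ ^ 2
        = 8 * π * ρ t + (9/8) * deriv ψ t + (9/8) * H₀ * ψ t - (3/16) * (ψ t) ^ 2 :=
  deSitter_first_friedmann_general H₀ α I θ hθ hrange ψ hψ ρ hρ
end
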